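/- [Periodicity] Let char F = p > 0 and r \u2264 min{s, s', p^m}. If s \u2261 s' (mod p^m), then the deviation vectors coincide: \u03b5(r,s,p) = \u03b5(r,s',p), where \u03b5(r,s,p) = (\u03bb_1 - s, \u2026, \u03bb_r - s) and \u03bb(r,s,p) = (\u03bb_1, \u2026, \u03bb_r) is the Jordan partition of J_r \u2297 J_s. -/

import Mathlib

/-!
Let `q = p ^ m` and `N_s = J_r ⊗ J_s - 1`. In characteristic `p`, `J_r ^ q = 1` because `r ≤ q`,
while `J_{s+q} ^ q = 1 + S ^ q` for the nilpotent shift `S`; hence `N_{s+q} ^ q = 1 ⊗ S ^ q`.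
On `F ^ (s + q)`, `S ^ q` is the projection onto the last `s` coordinates followed by the
inclusion as the first `s` coordinates, and that inclusion intertwines `J_s` with `J_{s+q}`.
With `P = 1 ⊗ inclusion` (injective) and `Q = 1 ⊗ projection` (surjective) this gives
`N_{s+q} ^ (q + t) = P N_s ^ t Q`, so `rank N_{s+q} ^ (q + t) = rank N_s ^ t` for every `t`.
The rank sequence determines the Jordan partition through the counts `#{i | k ≤ λ i}`, so the
partition for `s + q` is the one for `s` shifted by `q`; iterating handles `s' = s + c q`.
-/

open Matrix Kronecker

/-- The `k × k` upper-triangular Jordan block with eigenvalue `1`. -/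
def jordanBlock (F : Type*) [Zero F] [One F] (k : ℕ) : Matrix (Fin k) (Fin k) F :=
  Matrix.of fun i j => if j = i then 1 else if (j : ℕ) = (i : ℕ) + 1 then 1 else 0

/-- `lam : Fin r → ℕ` is the Jordan partition of the square matrix `M`
(with eigenvalue 1), characterized by: `lam` is weakly decreasing with positive
parts, and for every `k` the rank of `(M - 1)^k` equals `∑ i, max (lam i - k) 0`.
Over a field this holds iff `M` is similar to the direct sum of the unipotent
Jordan blocks `J_{lam i}`. -/
def IsJordanSeq {F : Type*} [CommRing F] {n : Type*} [Fintype n] [DecidableEq n]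
    {r : ℕ} (M : Matrix n n F) (lam : Fin r → ℕ) : Prop :=
  Antitone lam ∧ (∀ i, 0 < lam i) ∧
    ∀ k : ℕ, ((M - 1) ^ k).rank = ∑ i, (lam i - k)

open Finset

section CharP

variable {A : Type*} [Ring A] (p : ℕ) [Fact p.Prime]

open Polynomial in
theorem one_add_pow_char_pow (R : Type*) [CommRing R] [Algebra R A] [CharP R p] (a : A)
    (n : ℕ) : (1 + a) ^ p ^ n = 1 + a ^ p ^ n := by
  simpa using congrArg (aeval a) (add_pow_char_pow (1 : R[X]) X (p := p) (n := n))

theorem sub_one_pow_char_pow (R : Type*) [CommRing R] [Algebra R A] [CharP R p] (a : A)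
    (n : ℕ) : (a - 1) ^ p ^ n = a ^ p ^ n - 1 := by
  have h := one_add_pow_char_pow p R (a - 1) n
  rw [add_sub_cancel] at h
  rw [h, add_sub_cancel_left]

end CharP

theorem Fin.sum_ite_val_eq {M : Type*} [AddCommMonoid M] {k : ℕ} (a : ℕ) (f : Fin k → M) :
    ∑ l : Fin k, (if (l : ℕ) = a then f l else 0) = if h : a < k then f ⟨a, h⟩ else 0 := by
  split_ifs with h
  · simp_rw [← Fin.ext_iff (b := ⟨a, h⟩), Finset.sum_ite_eq', Finset.mem_univ, if_true]
  · exact Finset.sum_eq_zero fun l _ => if_neg (by omega)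

theorem Fin.sum_ite_eq_val {M : Type*} [AddCommMonoid M] {k : ℕ} (a : ℕ) (f : Fin k → M) :
    ∑ l : Fin k, (if a = (l : ℕ) then f l else 0) = if h : a < k then f ⟨a, h⟩ else 0 := by
  simp_rw [eq_comm (a := a), Fin.sum_ite_val_eq]

namespace Matrix

variable {R l m n o : Type*}

theorem kronecker_pow [CommSemiring R] [Fintype m] [Fintype n] [DecidableEq m] [DecidableEq n]
    (A : Matrix m m R) (B : Matrix n n R) (e : ℕ) : (A ⊗ₖ B) ^ e = (A ^ e) ⊗ₖ (B ^ e) := by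
  induction e with
  | zero => simp only [pow_zero, one_kronecker_one]
  | succ e ih => rw [pow_succ, pow_succ, pow_succ, ih, mul_kronecker_mul]

theorem pow_mul_eq_mul_pow_of_mul_eq [Semiring R] [Fintype m] [Fintype n] [DecidableEq m]
    [DecidableEq n] {A : Matrix m m R} {B : Matrix n n R} {P : Matrix m n R}
    (h : A * P = P * B) (t : ℕ) : A ^ t * P = P * B ^ t := by
  induction t with
  | zero => rw [pow_zero, pow_zero, Matrix.one_mul, Matrix.mul_one]
  | succ t ih => rw [pow_succ, pow_succ, Matrix.mul_assoc, h, ← Matrix.mul_assoc, ih,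
      Matrix.mul_assoc]

variable [CommRing R] [StrongRankCondition R]

theorem rank_mul_of_left_inverse [Fintype m] [Fintype n] [Fintype o] [DecidableEq n]
    {L : Matrix n m R} {P : Matrix m n R} (h : L * P = 1) (B : Matrix n o R) :
    (P * B).rank = B.rank :=
  le_antisymm (rank_mul_le_right P B) <| by
    simpa [← Matrix.mul_assoc, h] using rank_mul_le_right L (P * B)

theorem rank_mul_of_right_inverse [Fintype m] [Fintype n] [DecidableEq m]
    {Q : Matrix m n R} {Q' : Matrix n m R} (h : Q * Q' = 1) (A : Matrix l m R) :
    (A * Q).rank = A.rank :=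
  le_antisymm (rank_mul_le_left A Q) <| by
    simpa [Matrix.mul_assoc, h] using rank_mul_le_left (A * Q) Q'

end Matrix

section Shifts

def superdiag (R : Type*) [Zero R] [One R] (k e : ℕ) : Matrix (Fin k) (Fin k) R :=
  of fun i j => if (j : ℕ) = i + e then 1 else 0

def headInclusion (R : Type*) [Zero R] [One R] (s q : ℕ) : Matrix (Fin (s + q)) (Fin s) R :=
  of fun i b => if (i : ℕ) = b then 1 else 0

def tailProjection (R : Type*) [Zero R] [One R] (s q : ℕ) : Matrix (Fin s) (Fin (s + q)) R :=
  of fun b j => if (j : ℕ) = b + q then 1 else 0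

variable {R : Type*} [Semiring R]

theorem superdiag_zero (k : ℕ) : superdiag R k 0 = 1 := by
  ext i j
  simp [superdiag, one_apply, Fin.ext_iff, eq_comm]

theorem superdiag_mul_superdiag (k e e' : ℕ) :
    superdiag R k e * superdiag R k e' = superdiag R k (e + e') := by
  ext i j
  simp only [superdiag, mul_apply, of_apply, boole_mul, Fin.sum_ite_val_eq]
  have := j.isLt
  split_ifs <;> first | rfl | omega

theorem superdiag_one_pow (k e : ℕ) : superdiag R k 1 ^ e = superdiag R k e := by
  induction e with
  | zero => rw [pow_zero, superdiag_zero]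
  | succ e ih => rw [pow_succ, ih, superdiag_mul_superdiag]

theorem superdiag_of_le {k e : ℕ} (h : k ≤ e) : superdiag R k e = 0 := by
  ext i j
  exact if_neg (by omega)

theorem jordanBlock_eq_one_add_superdiag (k : ℕ) : jordanBlock R k = 1 + superdiag R k 1 := by
  ext i j
  simp only [jordanBlock, superdiag, Matrix.add_apply, one_apply, of_apply, Fin.ext_iff]
  split_ifs <;> first | rfl | omega | simp

theorem headInclusion_transpose_mul (s q : ℕ) :
    (headInclusion R s q)ᵀ * headInclusion R s q = 1 := by
  ext b c
  simp only [headInclusion, transpose_apply, mul_apply, of_apply, boole_mul, one_apply,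
    Fin.sum_ite_val_eq, Fin.ext_iff]
  split_ifs <;> first | rfl | omega

theorem tailProjection_mul_transpose (s q : ℕ) :
    tailProjection R s q * (tailProjection R s q)ᵀ = 1 := by
  ext b c
  simp only [tailProjection, transpose_apply, mul_apply, of_apply, boole_mul, one_apply,
    Fin.sum_ite_val_eq, Fin.ext_iff]
  split_ifs <;> first | rfl | omega

theorem headInclusion_mul_tailProjection (s q : ℕ) :
    headInclusion R s q * tailProjection R s q = superdiag R (s + q) q := by
  ext i j
  simp only [headInclusion, tailProjection, superdiag, mul_apply, of_apply, boole_mul,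
    Fin.sum_ite_eq_val]
  have := j.isLt
  split_ifs <;> first | rfl | omega

theorem jordanBlock_mul_headInclusion (s q : ℕ) :
    jordanBlock R (s + q) * headInclusion R s q = headInclusion R s q * jordanBlock R s := by
  suffices superdiag R (s + q) 1 * headInclusion R s q = headInclusion R s q * superdiag R s 1 by
    rw [jordanBlock_eq_one_add_superdiag, jordanBlock_eq_one_add_superdiag, Matrix.add_mul,
      Matrix.mul_add, Matrix.one_mul, Matrix.mul_one, this]
  ext i b
  simp only [headInclusion, superdiag, mul_apply, of_apply, boole_mul, Fin.sum_ite_val_eq,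
    Fin.sum_ite_eq_val]
  have := b.isLt
  split_ifs <;> first | rfl | omega

end Shifts

section Periodicity

variable {R : Type*} [CommRing R] (p : ℕ) [CharP R p] [Fact p.Prime]

theorem jordanBlock_pow_char_pow (k n : ℕ) :
    jordanBlock R k ^ p ^ n = 1 + superdiag R k (p ^ n) := by
  rw [jordanBlock_eq_one_add_superdiag, one_add_pow_char_pow p R, superdiag_one_pow]

theorem jordanBlock_pow_char_pow_of_le {k n : ℕ} (h : k ≤ p ^ n) :
    jordanBlock R k ^ p ^ n = 1 := by
  rw [jordanBlock_pow_char_pow p, superdiag_of_le h, add_zero]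

variable [StrongRankCondition R]

theorem rank_kronecker_jordanBlock_sub_one_pow_add {r n : ℕ} (hr : r ≤ p ^ n) (s t : ℕ) :
    ((jordanBlock R r ⊗ₖ jordanBlock R (s + p ^ n) - 1) ^ (p ^ n + t)).rank
      = ((jordanBlock R r ⊗ₖ jordanBlock R s - 1) ^ t).rank := by
  set q := p ^ n
  set P := (1 : Matrix (Fin r) (Fin r) R) ⊗ₖ headInclusion R s q
  set Q := (1 : Matrix (Fin r) (Fin r) R) ⊗ₖ tailProjection R s q
  have hpow : (jordanBlock R r ⊗ₖ jordanBlock R (s + q) - 1) ^ q = P * Q := by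
    rw [sub_one_pow_char_pow p R, kronecker_pow, jordanBlock_pow_char_pow_of_le p hr,
      jordanBlock_pow_char_pow p, kronecker_add, one_kronecker_one, add_sub_cancel_left,
      ← mul_kronecker_mul, Matrix.one_mul, headInclusion_mul_tailProjection]
  have hintertwine : (jordanBlock R r ⊗ₖ jordanBlock R (s + q) - 1) * P
      = P * (jordanBlock R r ⊗ₖ jordanBlock R s - 1) := by
    rw [Matrix.sub_mul, Matrix.mul_sub, Matrix.one_mul, Matrix.mul_one, ← mul_kronecker_mul,
      ← mul_kronecker_mul, Matrix.mul_one, Matrix.one_mul, jordanBlock_mul_headInclusion]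
  have hP : ((1 : Matrix (Fin r) (Fin r) R) ⊗ₖ (headInclusion R s q)ᵀ) * P = 1 := by
    rw [← mul_kronecker_mul, Matrix.one_mul, headInclusion_transpose_mul, one_kronecker_one]
  have hQ : Q * ((1 : Matrix (Fin r) (Fin r) R) ⊗ₖ (tailProjection R s q)ᵀ) = 1 := by
    rw [← mul_kronecker_mul, Matrix.one_mul, tailProjection_mul_transpose, one_kronecker_one]
  rw [add_comm q t, pow_add, hpow, ← Matrix.mul_assoc, pow_mul_eq_mul_pow_of_mul_eq hintertwine,
    Matrix.mul_assoc, rank_mul_of_left_inverse hP, rank_mul_of_right_inverse hQ]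

theorem rank_kronecker_jordanBlock_sub_one_pow_mul_add {r n : ℕ} (hr : r ≤ p ^ n) (s c t : ℕ) :
    ((jordanBlock R r ⊗ₖ jordanBlock R (s + p ^ n * c) - 1) ^ (p ^ n * c + t)).rank
      = ((jordanBlock R r ⊗ₖ jordanBlock R s - 1) ^ t).rank := by
  induction c generalizing t with
  | zero => simp only [Nat.mul_zero, Nat.add_zero, Nat.zero_add]
  | succ c ih =>
    rw [show s + p ^ n * (c + 1) = s + p ^ n * c + p ^ n by ring,
      show p ^ n * (c + 1) + t = p ^ n + (p ^ n * c + t) by ring,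
      rank_kronecker_jordanBlock_sub_one_pow_add p hr, ih]

end Periodicity

theorem sum_tsub_eq_sum_tsub_succ_add_card {ι : Type*} [Fintype ι] (f : ι → ℕ) (k : ℕ) :
    ∑ i, (f i - k) = ∑ i, (f i - (k + 1)) + #{i | k + 1 ≤ f i} := by
  rw [card_filter, ← sum_add_distrib]
  exact sum_congr rfl fun i _ => by split_ifs <;> omega

theorem Antitone.le_apply_iff_lt_card {r : ℕ} {f : Fin r → ℕ} (hf : Antitone f) (k : ℕ)
    (i : Fin r) : k ≤ f i ↔ (i : ℕ) < #{j | k ≤ f j} := by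
  constructor
  · intro hi
    have hsub : Iic i ⊆ ({j | k ≤ f j} : Finset (Fin r)) := fun j hj => by
      simpa using hi.trans (hf (mem_Iic.mp hj))
    simpa using card_le_card hsub
  · intro hi
    by_contra! hlt
    have hsub : ({j | k ≤ f j} : Finset (Fin r)) ⊆ Iio i := fun j hj => by
      simp only [mem_filter, mem_univ, true_and] at hj
      exact mem_Iio.mpr (lt_of_not_ge fun hij => ((hf hij).trans_lt hlt).not_ge hj)
    have := card_le_card hsub
    simp only [Fin.card_Iio] at this
    omega

theorem Antitone.eq_add_of_sum_tsub_eq {r d : ℕ} {f g : Fin r → ℕ} (hf : Antitone f)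
    (hg : Antitone g) (hpos : ∀ i, 0 < f i)
    (h : ∀ k, ∑ i, (g i - (d + k)) = ∑ i, (f i - k)) (i : Fin r) : g i = f i + d := by
  have hcard : ∀ k, #{j | d + k + 1 ≤ g j} = #{j | k + 1 ≤ f j} := fun k => by
    have hf' := sum_tsub_eq_sum_tsub_succ_add_card f k
    have hg' := sum_tsub_eq_sum_tsub_succ_add_card g (d + k)
    have hk := h k
    have hk' := h (k + 1)
    rw [← add_assoc] at hk'
    omega
  have hiff : ∀ k, k + 1 ≤ f i ↔ d + k + 1 ≤ g i := fun k => by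
    rw [hf.le_apply_iff_lt_card, hg.le_apply_iff_lt_card, hcard]
  have hge := (hiff (f i - 1)).mp (by have := hpos i; omega)
  have hlt := mt (hiff (f i)).mpr (by omega)
  omega

theorem IsJordanSeq.eq_add_of_rank_pow_add_eq {R n n' : Type*} [CommRing R] [Fintype n]
    [DecidableEq n] [Fintype n'] [DecidableEq n'] {r d : ℕ} {M : Matrix n n R}
    {M' : Matrix n' n' R} {lam lam' : Fin r → ℕ} (h : IsJordanSeq M lam)
    (h' : IsJordanSeq M' lam') (hrank : ∀ t, ((M' - 1) ^ (d + t)).rank = ((M - 1) ^ t).rank)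
    (i : Fin r) : lam' i = lam i + d :=
  h.1.eq_add_of_sum_tsub_eq h'.1 h.2.1 (fun k => by rw [← h.2.2, ← h'.2.2, hrank]) i

theorem stmt13_general (F : Type*) [Field F] (p : ℕ) [CharP F p] (hp : p.Prime)
    (m r s s' : ℕ) (hrpm : r ≤ p ^ m)
    (hcong : s % p ^ m = s' % p ^ m)
    (lam lam' : Fin r → ℕ)
    (h1 : IsJordanSeq (jordanBlock F r ⊗ₖ jordanBlock F s) lam)
    (h2 : IsJordanSeq (jordanBlock F r ⊗ₖ jordanBlock F s') lam') :
    ∀ i : Fin r, (lam i : ℤ) - (s : ℤ) = (lam' i : ℤ) - (s' : ℤ) := by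
  have hfact : Fact p.Prime := ⟨hp⟩
  intro i
  wlog hss' : s ≤ s' generalizing s s' lam lam'
  · linarith [this s' s hcong.symm lam' lam h2 h1 (le_of_not_ge hss')]
  obtain ⟨c, hc⟩ : p ^ m ∣ s' - s := (Nat.modEq_iff_dvd' hss').mp hcong
  obtain rfl : s' = s + p ^ m * c := by omega
  have hshift := h1.eq_add_of_rank_pow_add_eq h2
    (rank_kronecker_jordanBlock_sub_one_pow_mul_add p hrpm s c) i
  push_cast [hshift]
  ring

/-- Periodicity: if `r ≤ min{s, s', p^m}` and `s ≡ s' (mod p^m)`, then the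
deviation vectors coincide: `λ_i(r,s,p) - s = λ_i(r,s',p) - s'` for all `i`. -/
theorem stmt13 (F : Type*) [Field F] (p : ℕ) [CharP F p] (hp : p.Prime)
    (m r s s' : ℕ) (hr : 1 ≤ r) (hrpm : r ≤ p ^ m) (hs : r ≤ s) (hs' : r ≤ s')
    (hcong : s % p ^ m = s' % p ^ m)
    (lam lam' : Fin r → ℕ)
    (h1 : IsJordanSeq (jordanBlock F r ⊗ₖ jordanBlock F s) lam)
    (h2 : IsJordanSeq (jordanBlock F r ⊗ₖ jordanBlock F s') lam') :
    ∀ i : Fin r, (lam i : ℤ) - (s : ℤ) = (lam' i : ℤ) - (s' : ℤ) :=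
  stmt13_general F p hp m r s s' hrpm hcong lam lam' h1 h2
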